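/- Combining Lemma 1 with the majority-vote probability bound: if T ≥ 3 is odd, the base classifiers are independent and each correct with probability ρ ≥ 1/2, and the reasonableness conditions hold for all examples, then the expected cost of the majority-vote ensemble on any finite example set S is at most the average expected cost of a single base classifier on S. -/

import Mathlib

/-! The expected cost is affine in the correctness probability `q`, and under the reasonableness
conditions every summand decreases in `q`; so it suffices that majority vote is correct at least
as often as one classifier (Condorcet's jury theorem). For `T = 2m + 1`, conditioning on the first
voter gives `Pc T ρ - ρ = (1 - ρ) P[B ≥ m + 1] - ρ P[B < m]` with `B ~ Bin(2m, ρ)`, and `j ↦ 2m - j`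
pairs each term of the second sum with a larger term of the first, since `1 - ρ ≤ ρ`. -/

open Finset

variable {ι : Type*} [DecidableEq ι]

/-- The majority-vote correctness probability of T classifiers each correct with probability ρ. -/
noncomputable def Pc (T : ℕ) (ρ : ℝ) : ℝ :=
  ∑ j ∈ Finset.Ioc (T / 2) T, (T.choose j : ℝ) * ρ ^ j * (1 - ρ) ^ (T - j)

/-- Expected total cost on S of a classifier correct with probability q. -/
noncomputable def ECost (S : Finset ι) (y : ι → Bool)
    (CTP CFP CFN CTN : ι → ℝ) (q : ℝ) : ℝ :=
  ∑ i ∈ S.filter (fun i => y i = true), (q * CTP i + (1 - q) * CFN i) +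
  ∑ i ∈ S.filter (fun i => y i = false), (q * CTN i + (1 - q) * CFP i)

namespace Binomial

noncomputable def term (n : ℕ) (ρ : ℝ) (j : ℕ) : ℝ :=
  n.choose j * ρ ^ j * (1 - ρ) ^ (n - j)

noncomputable def upperTail (n : ℕ) (ρ : ℝ) (k : ℕ) : ℝ :=
  ∑ j ∈ Ico k (n + 1), term n ρ j

theorem sum_range_term (n : ℕ) (ρ : ℝ) : ∑ j ∈ range (n + 1), term n ρ j = 1 := by
  simpa [term, mul_comm, mul_assoc, mul_left_comm] using (add_pow ρ (1 - ρ) n).symm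

theorem term_eq_zero_of_lt {n j : ℕ} (ρ : ℝ) (h : n < j) : term n ρ j = 0 := by
  simp [term, Nat.choose_eq_zero_of_lt h]

theorem term_succ_succ (n : ℕ) (ρ : ℝ) (j : ℕ) :
    term (n + 1) ρ (j + 1) = ρ * term n ρ j + (1 - ρ) * term n ρ (j + 1) := by
  rcases lt_or_ge j n with hj | hj
  · obtain ⟨d, rfl⟩ := Nat.exists_eq_add_of_lt hj
    simp only [term, Nat.choose_succ_succ, Nat.cast_add,
      show j + d + 1 + 1 - (j + 1) = d + 1 by omega, show j + d + 1 - j = d + 1 by omega,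
      show j + d + 1 - (j + 1) = d by omega]
    ring
  · obtain ⟨d, rfl⟩ := Nat.exists_eq_add_of_le hj
    simp only [term, Nat.choose_succ_succ, Nat.cast_add,
      Nat.choose_eq_zero_of_lt (show n < n + d + 1 by omega), Nat.cast_zero,
      show n + 1 - (n + d + 1) = 0 by omega, show n - (n + d) = 0 by omega]
    ring

theorem upperTail_succ_succ (n : ℕ) (ρ : ℝ) (k : ℕ) (hk : k ≤ n) :
    upperTail (n + 1) ρ (k + 1) = ρ * upperTail n ρ k + (1 - ρ) * upperTail n ρ (k + 1) := by
  have hshift (f : ℕ → ℝ) : ∑ j ∈ Ico (k + 1) (n + 2), f j = ∑ j ∈ Ico k (n + 1), f (j + 1) :=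
    (sum_Ico_add' f k (n + 1) 1).symm
  have hlast : ∑ j ∈ Ico (k + 1) (n + 2), term n ρ j = upperTail n ρ (k + 1) := by
    rw [sum_Ico_succ_top (by omega), term_eq_zero_of_lt ρ (by omega), add_zero, upperTail]
  rw [upperTail, hshift, ← hlast, hshift, upperTail, mul_sum, mul_sum, ← sum_add_distrib]
  exact sum_congr rfl fun j _ => term_succ_succ n ρ j

theorem mul_term_le_mul_term_sub {n k : ℕ} {ρ : ℝ} (hρ : 1 / 2 ≤ ρ) (hρ1 : ρ ≤ 1)
    (hk : 2 * k < n) : ρ * term n ρ k ≤ (1 - ρ) * term n ρ (n - k) := by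
  obtain ⟨d, rfl⟩ : ∃ d, n = 2 * k + d + 1 := ⟨n - 2 * k - 1, by omega⟩
  have hpow : (1 - ρ) ^ d ≤ ρ ^ d := pow_le_pow_left₀ (by linarith) (by linarith) d
  have hC : 0 ≤ ((2 * k + d + 1).choose k : ℝ) * ρ ^ (k + 1) * (1 - ρ) ^ (k + 1) := by
    have : 0 ≤ 1 - ρ := by linarith
    positivity
  rw [term, term, Nat.choose_symm (by omega), show 2 * k + d + 1 - (2 * k + d + 1 - k) = k by omega,
    show 2 * k + d + 1 - k = k + 1 + d by omega]
  calc ρ * (((2 * k + d + 1).choose k : ℝ) * ρ ^ k * (1 - ρ) ^ (k + 1 + d))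
      = ((2 * k + d + 1).choose k : ℝ) * ρ ^ (k + 1) * (1 - ρ) ^ (k + 1) * (1 - ρ) ^ d := by ring
    _ ≤ ((2 * k + d + 1).choose k : ℝ) * ρ ^ (k + 1) * (1 - ρ) ^ (k + 1) * ρ ^ d :=
      mul_le_mul_of_nonneg_left hpow hC
    _ = (1 - ρ) * (((2 * k + d + 1).choose k : ℝ) * ρ ^ (k + 1 + d) * (1 - ρ) ^ k) := by ring

theorem mul_lowerTail_le {m : ℕ} {ρ : ℝ} (hρ : 1 / 2 ≤ ρ) (hρ1 : ρ ≤ 1) :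
    ρ * ∑ j ∈ range m, term (2 * m) ρ j ≤ (1 - ρ) * upperTail (2 * m) ρ (m + 1) := by
  have hreflect : upperTail (2 * m) ρ (m + 1) = ∑ j ∈ range m, term (2 * m) ρ (2 * m - j) := by
    rw [upperTail, range_eq_Ico, sum_Ico_reflect _ _ (by omega),
      show 2 * m + 1 - m = m + 1 by omega, Nat.sub_zero]
  rw [hreflect, mul_sum, mul_sum]
  exact sum_le_sum fun j hj => mul_term_le_mul_term_sub hρ hρ1 (by have := mem_range.1 hj; omega)

end Binomial

open Binomial in
theorem le_Pc_two_mul_add_one (m : ℕ) {ρ : ℝ} (hρ : 1 / 2 ≤ ρ) (hρ1 : ρ ≤ 1) :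
    ρ ≤ Pc (2 * m + 1) ρ := by
  have hPc : Pc (2 * m + 1) ρ = upperTail (2 * m + 1) ρ (m + 1) := by
    rw [Pc, upperTail, show (2 * m + 1) / 2 = m by omega]
    exact sum_congr (by ext; simp only [mem_Ioc, mem_Ico]; omega) fun _ _ => rfl
  have htotal : ∑ j ∈ range m, term (2 * m) ρ j + upperTail (2 * m) ρ m = 1 := by
    rw [upperTail, sum_range_add_sum_Ico _ (by omega), sum_range_term]
  rw [hPc, upperTail_succ_succ _ _ _ (by omega)]
  linear_combination mul_lowerTail_le hρ hρ1 (m := m) - ρ * htotal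

theorem ECost_le_of_le {α : Type*} {S : Finset α} {y : α → Bool} {CTP CFP CFN CTN : α → ℝ}
    (hreason : ∀ i ∈ S, CTN i < CFP i ∧ CTP i < CFN i) {p q : ℝ} (hpq : p ≤ q) :
    ECost S y CTP CFP CFN CTN q ≤ ECost S y CTP CFP CFN CTN p := by
  have hmono {a b : ℝ} (hab : a < b) : q * a + (1 - q) * b ≤ p * a + (1 - p) * b := by
    nlinarith
  apply add_le_add <;> refine sum_le_sum fun i hi => hmono ?_
  · exact (hreason i (mem_filter.1 hi).1).2
  · exact (hreason i (mem_filter.1 hi).1).1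

theorem ensemble_majority_cost_general (T : ℕ) (hodd : Odd T)
    (ρ : ℝ) (hρ : 1 / 2 ≤ ρ) (hρ1 : ρ ≤ 1)
    (S : Finset ι) (y : ι → Bool) (CTP CFP CFN CTN : ι → ℝ)
    (hreason : ∀ i ∈ S, CTN i < CFP i ∧ CTP i < CFN i) :
    ECost S y CTP CFP CFN CTN (Pc T ρ) ≤ ECost S y CTP CFP CFN CTN ρ := by
  obtain ⟨m, rfl⟩ := hodd
  exact ECost_le_of_le hreason (le_Pc_two_mul_add_one m hρ hρ1)

/-- For odd T ≥ 3 independent base classifiers each correct with probability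
ρ ≥ 1/2 (ρ ≤ 1), under the reasonableness conditions the expected cost of the majority-vote
ensemble on any finite example set S is at most the average expected cost of a base classifier. -/
theorem ensemble_majority_cost (T : ℕ) (hT : 3 ≤ T) (hodd : Odd T)
    (ρ : ℝ) (hρ : 1 / 2 ≤ ρ) (hρ1 : ρ ≤ 1)
    (S : Finset ι) (y : ι → Bool) (CTP CFP CFN CTN : ι → ℝ)
    (hreason : ∀ i ∈ S, CTN i < CFP i ∧ CTP i < CFN i) :
    ECost S y CTP CFP CFN CTN (Pc T ρ) ≤ ECost S y CTP CFP CFN CTN ρ :=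
  ensemble_majority_cost_general T hodd ρ hρ hρ1 S y CTP CFP CFN CTN hreason
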